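/- Let T = (S, I, O, λ_S, s0, Δ_S) be a complete deterministic TFSM with timeouts and U = (R, I∪{𝟙}, O∪{𝟙}, λ_R, r0) a complete deterministic untimed FSM. If there exists a 𝟙-bisimulation ∼ with (s0,0) ∼ r0, then for every timed input word v = (i1,t1)…(im,tm), 𝟙(B_T(v)) = B_U(𝟙(v)). -/

import Mathlib

open scoped Classical

namespace TFSMPaper

/-- A guard: an interval with integer (natural) endpoints; `hi = none` means `∞`;
`lclosed`/`rclosed` say whether the left/right delimiter is closed. -/
structure Guard where
  lo : ℕ
  hi : Option ℕ
  lclosed : Bool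
  rclosed : Bool
deriving DecidableEq

/-- Membership of a real clock value in a guard. -/
def Guard.mem (g : Guard) (x : ℝ) : Prop :=
  (if g.lclosed then (g.lo : ℝ) ≤ x else (g.lo : ℝ) < x) ∧
  (match g.hi with
    | none => True
    | some n => if g.rclosed then x ≤ (n : ℝ) else x < (n : ℝ))

/-- `J ⊆ g` as subsets of nonnegative reals. -/
def Guard.subset (J g : Guard) : Prop := ∀ x : ℝ, 0 ≤ x → J.mem x → g.mem x

/-- A guard is left-closed and right-open. -/
def Guard.LCRO (g : Guard) : Prop := g.lclosed = true ∧ g.rclosed = false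

/-- The point interval `[n,n]`. -/
def ptG (n : ℕ) : Guard := ⟨n, some n, true, true⟩

/-- The open interval `(n,n+1)`. -/
def opG (n : ℕ) : Guard := ⟨n, some (n + 1), false, false⟩

/-- The unbounded interval `(N,∞)`. -/
def infG (N : ℕ) : Guard := ⟨N, none, false, false⟩

/-- The set `𝕀_N` of abstract intervals. -/
def IN (N : ℕ) : Set Guard :=
  {g | (∃ n ≤ N, g = ptG n) ∨ (∃ n < N, g = opG n) ∨ g = infG N}

/-- All integer constants appearing in `g` are at most `N`. -/
def Guard.boundedBy (g : Guard) (N : ℕ) : Prop :=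
  g.lo ≤ N ∧ ∀ n, g.hi = some n → n ≤ N

/-- A timed word: strictly increasing, nonnegative timestamps. -/
def IsTimedWord {A : Type*} (v : List (A × ℝ)) : Prop :=
  v.Chain' (fun p q => p.2 < q.2) ∧ ∀ p ∈ v, (0 : ℝ) ≤ p.2

/-- Delete the timestamps of a timed word. -/
def untime {A : Type*} (v : List (A × ℝ)) : List A := v.map Prod.fst

/-! ### Untimed FSMs -/

/-- An untimed FSM with input alphabet `Γi`, output alphabet `Γo` and states `R`. -/
structure FSM (Γi Γo R : Type*) where
  trans : R → Γi → Γo → R → Prop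
  init : R

/-- `Run U r v w r'`: from state `r`, reading input word `v`, `U` can produce
output word `w` and reach `r'`. -/
inductive FSM.Run {Γi Γo R : Type*} (U : FSM Γi Γo R) : R → List Γi → List Γo → R → Prop
  | nil (r : R) : FSM.Run U r [] [] r
  | cons {r r' rf : R} {a : Γi} {b : Γo} {v : List Γi} {w : List Γo} :
      U.trans r a b r' → FSM.Run U r' v w rf → FSM.Run U r (a :: v) (b :: w) rf

/-- The behavior of `U`: `w ∈ B_U(v)`. -/
def FSM.Produces {Γi Γo R : Type*} (U : FSM Γi Γo R) (v : List Γi) (w : List Γo) : Prop :=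
  ∃ rf, U.Run U.init v w rf

def FSM.Complete {Γi Γo R : Type*} (U : FSM Γi Γo R) : Prop :=
  ∀ r a, ∃ b r', U.trans r a b r'

def FSM.Deterministic {Γi Γo R : Type*} (U : FSM Γi Γo R) : Prop :=
  ∀ r a b b' r' r'', U.trans r a b r' → U.trans r a b' r'' → b = b' ∧ r' = r''

/-! ### TFSMs with timed guards -/

/-- A TFSM with timed guards. -/
structure TFSMG (S I O : Type*) where
  trans : S → I → Guard → O → S → Prop
  init : S

/-- Input/output transition `(s,x) →(i,o) (s',0)`: some transition with a guard
containing the current clock value `x` fires. -/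
def TFSMG.IOTrans {S I O : Type*} (M : TFSMG S I O) (s : S) (x : ℝ) (i : I) (o : O)
    (s' : S) : Prop :=
  ∃ g, M.trans s i g o s' ∧ g.mem x

/-- `RunFrom M s t v w s'`: starting in state `s` (clock 0) at absolute time `t`,
reading the timed input word `v`, `M` produces the timed output word `w`
(outputs are instantaneous) and reaches `s'`. -/
inductive TFSMG.RunFrom {S I O : Type*} (M : TFSMG S I O) :
    S → ℝ → List (I × ℝ) → List (O × ℝ) → S → Prop
  | nil (s : S) (t : ℝ) : TFSMG.RunFrom M s t [] [] s
  | cons {s s' sf : S} {t t' : ℝ} {i : I} {o : O} {v : List (I × ℝ)} {w : List (O × ℝ)} :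
      M.IOTrans s (t' - t) i o s' → TFSMG.RunFrom M s' t' v w sf →
      TFSMG.RunFrom M s t ((i, t') :: v) ((o, t') :: w) sf

/-- The behavior of `M`: `w ∈ B_M(v)`. -/
def TFSMG.Produces {S I O : Type*} (M : TFSMG S I O) (v : List (I × ℝ))
    (w : List (O × ℝ)) : Prop :=
  ∃ sf, M.RunFrom M.init 0 v w sf

/-- Completeness: in every state, for every input and clock value, some transition fires. -/
def TFSMG.Complete {S I O : Type*} (M : TFSMG S I O) : Prop :=
  ∀ s i (x : ℝ), 0 ≤ x → ∃ g o s', M.trans s i g o s' ∧ g.mem x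

/-- Determinism: at most one input/output transition for each state, input and clock value. -/
def TFSMG.Deterministic {S I O : Type*} (M : TFSMG S I O) : Prop :=
  ∀ s i (x : ℝ) g g' o o' s' s'', M.trans s i g o s' → M.trans s i g' o' s'' →
    g.mem x → g'.mem x → o = o' ∧ s' = s''

/-- `N ≥ max(M)`: every integer constant in the guards of `M` is at most `N`. -/
def TFSMG.boundedBy {S I O : Type*} (M : TFSMG S I O) (N : ℕ) : Prop :=
  ∀ s i g o s', M.trans s i g o s' → g.boundedBy N

/-- The unique interval of `𝕀_N` containing the delay `t`. -/
noncomputable def INdur (N : ℕ) (t : ℝ) : Guard :=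
  if (N : ℝ) < t then infG N
  else if ∃ n : ℕ, (n : ℝ) = t then ptG ⌊t⌋₊
  else opG ⌊t⌋₊

/-- The `𝕀_N`-abstraction of a timed word (the extra `ℝ` argument is the previous
timestamp, initially `0`). -/
noncomputable def INabs {A : Type*} (N : ℕ) : ℝ → List (A × ℝ) → List (A × Guard)
  | _, [] => []
  | t, (a, t') :: v => (a, INdur N (t' - t)) :: INabs N t' v

/-- The abstract FSM `A^N_M` of a TFSM with timed guards. -/
def absFSMG {S I O : Type*} (N : ℕ) (M : TFSMG S I O) : FSM (I × Guard) O S where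
  trans s p o s' := p.2 ∈ IN N ∧ ∃ g, M.trans s p.1 g o s' ∧ p.2.subset g
  init := M.init

/-- `𝕀_N`-bisimulation between a TFSM with timed guards and an untimed FSM. -/
def INBisim {S I O R : Type*} (N : ℕ) (M : TFSMG S I O) (U : FSM (I × Guard) O R)
    (Rel : S → R → Prop) : Prop :=
  ∀ s r, Rel s r →
    (∀ i g o s', M.trans s i g o s' → ∀ J ∈ IN N, J.subset g →
        ∃ r', U.trans r (i, J) o r' ∧ Rel s' r') ∧
    (∀ i J o r', J ∈ IN N → U.trans r (i, J) o r' →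
        ∃ g s', M.trans s i g o s' ∧ J.subset g ∧ Rel s' r')

/-! ### TFSMs with timeouts -/

/-- A TFSM with timeouts; `timeout s = (s', none)` means timeout `∞`. -/
structure TFSMT (S I O : Type*) where
  trans : S → I → O → S → Prop
  init : S
  timeout : S → S × Option ℕ
  timeout_pos : ∀ s n, (timeout s).2 = some n → 0 < n

/-- The timed transition relation `(s,x) →t (s',x')`. -/
inductive TFSMT.Elapse {S I O : Type*} (M : TFSMT S I O) : S → ℝ → ℝ → S → ℝ → Prop
  | stay {s : S} {x t : ℝ} : 0 ≤ x → 0 ≤ t →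
      (∀ n, (M.timeout s).2 = some n → x + t < n) → TFSMT.Elapse M s x t s (x + t)
  | tmo {s : S} {x t : ℝ} {n : ℕ} : 0 ≤ x → 0 ≤ t → (M.timeout s).2 = some n →
      x + t = n → TFSMT.Elapse M s x t (M.timeout s).1 0
  | comp {s s' s'' : S} {x x' x'' t₁ t₂ : ℝ} :
      TFSMT.Elapse M s x t₁ s' x' → TFSMT.Elapse M s' x' t₂ s'' x'' →
      TFSMT.Elapse M s x (t₁ + t₂) s'' x''

/-- Input/output transition `(s,x) →(i,o) (s',0)`. -/
def TFSMT.IOTrans {S I O : Type*} (M : TFSMT S I O) (s : S) (x : ℝ) (i : I) (o : O)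
    (s' : S) : Prop :=
  M.trans s i o s' ∧ 0 ≤ x ∧ ∀ n, (M.timeout s).2 = some n → x < n

/-- Run of a TFSM with timeouts on a timed input word. -/
inductive TFSMT.RunFrom {S I O : Type*} (M : TFSMT S I O) :
    S → ℝ → List (I × ℝ) → List (O × ℝ) → S → Prop
  | nil (s : S) (t : ℝ) : TFSMT.RunFrom M s t [] [] s
  | cons {s s'' s' sf : S} {x t t' : ℝ} {i : I} {o : O} {v : List (I × ℝ)} {w : List (O × ℝ)} :
      M.Elapse s 0 (t' - t) s'' x → M.IOTrans s'' x i o s' →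
      TFSMT.RunFrom M s' t' v w sf →
      TFSMT.RunFrom M s t ((i, t') :: v) ((o, t') :: w) sf

/-- The behavior of `M`: `w ∈ B_M(v)`. -/
def TFSMT.Produces {S I O : Type*} (M : TFSMT S I O) (v : List (I × ℝ))
    (w : List (O × ℝ)) : Prop :=
  ∃ sf, M.RunFrom M.init 0 v w sf

def TFSMT.Complete {S I O : Type*} (M : TFSMT S I O) : Prop :=
  ∀ s i, ∃ o s', M.trans s i o s'

def TFSMT.Deterministic {S I O : Type*} (M : TFSMT S I O) : Prop :=
  ∀ s i o o' s' s'', M.trans s i o s' → M.trans s i o' s'' → o = o' ∧ s' = s''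

/-- The `𝟙`-abstraction of a timed word: `none` is the delay symbol `𝟙`
(the extra `ℝ` argument is the previous timestamp, initially `0`). -/
noncomputable def oneAbs {A : Type*} : ℝ → List (A × ℝ) → List (Option A)
  | _, [] => []
  | t, (a, t') :: v => List.replicate ⌊t' - t⌋₊ none ++ some a :: oneAbs t' v

/-- `𝟙`-bisimulation between a TFSM with timeouts and an untimed FSM
(`none` plays the role of `𝟙` in both alphabets). -/
def OneBisim {S I O R : Type*} (M : TFSMT S I O) (U : FSM (Option I) (Option O) R)
    (Rel : S → ℝ → R → Prop) : Prop :=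
  ∀ s x r, Rel s x r →
    (∀ t s' x', 0 ≤ t → ⌊x + t⌋₊ = ⌊x + 1⌋₊ → M.Elapse s x t s' x' →
        ∃ r', U.trans r none none r' ∧ Rel s' x' r') ∧
    (∀ r', U.trans r none none r' → ∀ t, 0 ≤ t → ⌊x + t⌋₊ = ⌊x + 1⌋₊ →
        ∃ s' x', M.Elapse s x t s' x' ∧ Rel s' x' r') ∧
    (∀ t i o s', 0 ≤ t → ⌊x⌋₊ = ⌊x + t⌋₊ → M.Elapse s x t s (x + t) →
        M.IOTrans s (x + t) i o s' → ∃ r', U.trans r (some i) (some o) r' ∧ Rel s' 0 r') ∧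
    (∀ i o r', U.trans r (some i) (some o) r' → ∀ t, 0 ≤ t → ⌊x⌋₊ = ⌊x + t⌋₊ →
        ∃ s', M.Elapse s x t s (x + t) ∧ M.IOTrans s (x + t) i o s' ∧ Rel s' 0 r')

/-- The `𝟙`-abstract FSM `A_M` of a TFSM with timeouts. -/
def oneAbsFSM {S I O : Type*} (M : TFSMT S I O) : FSM (Option I) (Option O) (S × ℕ) where
  trans p a b q :=
    (a = none ∧ b = none ∧
      ((q.1 = p.1 ∧ q.2 = p.2 + 1 ∧ ∃ m, (M.timeout p.1).2 = some m ∧ p.2 + 1 < m) ∨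
       (M.timeout p.1 = (q.1, some (p.2 + 1)) ∧ q.2 = 0) ∨
       (p.2 = 0 ∧ (M.timeout p.1).2 = none ∧ q = p))) ∨
    (∃ i o, a = some i ∧ b = some o ∧ M.trans p.1 i o q.1 ∧ q.2 = 0)
  init := (M.init, 0)

/-- One step of the timeout function (only from states with a finite timeout). -/
def TFSMT.TimeoutStep {S I O : Type*} (M : TFSMT S I O) (s s' : S) : Prop :=
  (M.timeout s).2 ≠ none ∧ s' = (M.timeout s).1

/-- No cycles of timeout transitions. -/
def TFSMT.LoopFree {S I O : Type*} (M : TFSMT S I O) : Prop :=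
  ∀ s, ¬ Relation.TransGen M.TimeoutStep s s

/-! ### TFSMs with timed guards and timeouts -/

/-- A TFSM with both timed guards and timeouts. -/
structure TFSMGT (S I O : Type*) where
  trans : S → I → Guard → O → S → Prop
  init : S
  timeout : S → S × Option ℕ

/-- The timed transition relation `(s,x) →t (s',x')`. -/
inductive TFSMGT.Elapse {S I O : Type*} (M : TFSMGT S I O) : S → ℝ → ℝ → S → ℝ → Prop
  | stay {s : S} {x t : ℝ} : 0 ≤ x → 0 ≤ t →
      (∀ n, (M.timeout s).2 = some n → x + t < n) → TFSMGT.Elapse M s x t s (x + t)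
  | tmo {s : S} {x t : ℝ} {n : ℕ} : 0 ≤ x → 0 ≤ t → (M.timeout s).2 = some n →
      x + t = n → TFSMGT.Elapse M s x t (M.timeout s).1 0
  | comp {s s' s'' : S} {x x' x'' t₁ t₂ : ℝ} :
      TFSMGT.Elapse M s x t₁ s' x' → TFSMGT.Elapse M s' x' t₂ s'' x'' →
      TFSMGT.Elapse M s x (t₁ + t₂) s'' x''

/-- Input/output transition `(s,x) →(i,o) (s',0)`. -/
def TFSMGT.IOTrans {S I O : Type*} (M : TFSMGT S I O) (s : S) (x : ℝ) (i : I) (o : O)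
    (s' : S) : Prop :=
  (∃ g, M.trans s i g o s' ∧ g.mem x) ∧ 0 ≤ x ∧ ∀ n, (M.timeout s).2 = some n → x < n

/-- Run of a TFSM with timed guards and timeouts on a timed input word. -/
inductive TFSMGT.RunFrom {S I O : Type*} (M : TFSMGT S I O) :
    S → ℝ → List (I × ℝ) → List (O × ℝ) → S → Prop
  | nil (s : S) (t : ℝ) : TFSMGT.RunFrom M s t [] [] s
  | cons {s s'' s' sf : S} {x t t' : ℝ} {i : I} {o : O} {v : List (I × ℝ)} {w : List (O × ℝ)} :
      M.Elapse s 0 (t' - t) s'' x → M.IOTrans s'' x i o s' →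
      TFSMGT.RunFrom M s' t' v w sf →
      TFSMGT.RunFrom M s t ((i, t') :: v) ((o, t') :: w) sf

def TFSMGT.Produces {S I O : Type*} (M : TFSMGT S I O) (v : List (I × ℝ))
    (w : List (O × ℝ)) : Prop :=
  ∃ sf, M.RunFrom M.init 0 v w sf

def TFSMGT.Complete {S I O : Type*} (M : TFSMGT S I O) : Prop :=
  ∀ s i (x : ℝ), 0 ≤ x → (∀ n, (M.timeout s).2 = some n → x < n) →
    ∃ g o s', M.trans s i g o s' ∧ g.mem x

def TFSMGT.Deterministic {S I O : Type*} (M : TFSMGT S I O) : Prop :=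
  ∀ s i (x : ℝ) g g' o o' s' s'', M.trans s i g o s' → M.trans s i g' o' s'' →
    g.mem x → g'.mem x → o = o' ∧ s' = s''

/-- `N ≥ max(M)`: all guard constants and all finite timeouts of `M` are at most `N`. -/
def TFSMGT.boundedBy {S I O : Type*} (M : TFSMGT S I O) (N : ℕ) : Prop :=
  (∀ s i g o s', M.trans s i g o s' → g.boundedBy N) ∧
  (∀ s m, (M.timeout s).2 = some m → m ≤ N)

/-- `N = max(M)`: `N` is the greatest integer constant appearing in `M`. -/
def TFSMGT.maxConst {S I O : Type*} (M : TFSMGT S I O) (N : ℕ) : Prop :=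
  M.boundedBy N ∧ ∀ N', M.boundedBy N' → N ≤ N'

/-- Number of `𝕥` symbols abstracting a delay `t`. -/
noncomputable def tNum (t : ℝ) : ℕ :=
  if ∃ n : ℕ, (n : ℝ) = t then 2 * ⌊t⌋₊ else 2 * ⌊t⌋₊ + 1

/-- The `𝕥`-abstraction of a timed word: `none` is the delay symbol `𝕥`
(the extra `ℝ` argument is the previous timestamp, initially `0`). -/
noncomputable def tAbs {A : Type*} : ℝ → List (A × ℝ) → List (Option A)
  | _, [] => []
  | t, (a, t') :: v => List.replicate (tNum (t' - t)) none ++ some a :: tAbs t' v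

/-- `𝕥`-bisimulation between a TFSM with timed guards and timeouts and an untimed FSM. -/
def TBisim {S I O R : Type*} (M : TFSMGT S I O) (U : FSM (Option I) (Option O) R)
    (Rel : S → ℝ → R → Prop) : Prop :=
  ∀ s x r, Rel s x r →
    (∀ t s' x', 0 < t → t < 1 → ((∃ n : ℕ, (n : ℝ) = x) ∨ ∃ n : ℕ, (n : ℝ) = x + t) →
        M.Elapse s x t s' x' → ∃ r', U.trans r none none r' ∧ Rel s' x' r') ∧
    (∀ r', U.trans r none none r' →
        ∀ t, 0 < t → t < 1 → ((∃ n : ℕ, (n : ℝ) = x) ∨ ∃ n : ℕ, (n : ℝ) = x + t) →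
        ∃ s' x', M.Elapse s x t s' x' ∧ Rel s' x' r') ∧
    (∀ i o s', M.IOTrans s x i o s' → ∃ r', U.trans r (some i) (some o) r' ∧ Rel s' 0 r') ∧
    (∀ i o r', U.trans r (some i) (some o) r' →
        ∃ s', M.IOTrans s x i o s' ∧ Rel s' 0 r')

/-- The `𝕥`-abstract FSM `A_M` of a TFSM with timed guards and timeouts. -/
def tAbsFSM {S I O : Type*} (N : ℕ) (M : TFSMGT S I O) :
    FSM (Option I) (Option O) (S × Guard) where
  trans p a b q :=
    (a = none ∧ b = none ∧
      ((∃ n, p.2 = ptG n ∧ q = (p.1, opG n) ∧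
          ∀ m, (M.timeout p.1).2 = some m → n + 1 ≤ m) ∨
       (∃ n, p.2 = opG n ∧ q = (p.1, ptG (n + 1)) ∧
          ∀ m, (M.timeout p.1).2 = some m → n + 1 < m) ∨
       (∃ n, p.2 = opG n ∧ M.timeout p.1 = (q.1, some (n + 1)) ∧ q.2 = ptG 0) ∨
       (p.2 = infG N ∧ (M.timeout p.1).2 = none ∧ q = p))) ∨
    (∃ i o, a = some i ∧ b = some o ∧ q.2 = ptG 0 ∧
      ∃ g, M.trans p.1 i g o q.1 ∧ p.2.subset g)
  init := (M.init, ptG 0)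

/-!
Split the run of `T` before each input at the integer part `k = ⌊d⌋` of the delay `d`. Clause (1)
of the bisimulation matches each of the `k` unit delays with a `𝟙/𝟙` step of `U`. Since timeouts
are integers and the clock starts at `0`, after the unit delays the clock is an integer strictly
below the current timeout, so the remaining delay `d - k < 1` neither fires a timeout nor crosses
an integer, and clause (3) matches it, together with the input, by an `i/o` step. Thus `U`
produces `𝟙(w)` on `𝟙(v)`, and it is the only output because `U` is deterministic.
-/

section Runs

variable {Γi Γo R : Type*} {U : FSM Γi Γo R}

theorem FSM.Run.append {r r' r'' : R} {v v' : List Γi} {w w' : List Γo}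
    (h : U.Run r v w r') (h' : U.Run r' v' w' r'') : U.Run r (v ++ v') (w ++ w') r'' := by
  induction h with
  | nil => exact h'
  | cons htr _ ih => exact .cons htr (ih h')

theorem FSM.Deterministic.run_eq (hU : U.Deterministic) {r r' r'' : R} {v : List Γi}
    {w w' : List Γo} (h : U.Run r v w r') (h' : U.Run r v w' r'') : w = w' ∧ r' = r'' := by
  induction h generalizing w' with
  | nil => cases h'; exact ⟨rfl, rfl⟩
  | cons htr _ ih =>
    obtain _ | ⟨htr', hrest'⟩ := h'
    obtain ⟨rfl, rfl⟩ := hU _ _ _ _ _ _ htr htr'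
    obtain ⟨rfl, rfl⟩ := ih hrest'
    exact ⟨rfl, rfl⟩

end Runs

namespace TFSMT

variable {S I O : Type*} {M : TFSMT S I O}

def IsTimedState (M : TFSMT S I O) (s : S) (x : ℝ) : Prop :=
  0 ≤ x ∧ ∀ n, (M.timeout s).2 = some n → x < n

theorem isTimedState_zero (M : TFSMT S I O) (s : S) : M.IsTimedState s 0 :=
  ⟨le_rfl, fun n hn => by exact_mod_cast M.timeout_pos s n hn⟩

namespace Elapse

variable {s σ : S} {x t ξ : ℝ}

theorem duration_nonneg (h : M.Elapse s x t σ ξ) : 0 ≤ t := by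
  induction h with
  | stay _ ht _ => exact ht
  | tmo _ ht _ _ => exact ht
  | comp _ _ ih₁ ih₂ => exact add_nonneg ih₁ ih₂

theorem isTimedState (h : M.Elapse s x t σ ξ) : M.IsTimedState σ ξ := by
  induction h with
  | stay hx ht hlt => exact ⟨add_nonneg hx ht, hlt⟩
  | tmo => exact M.isTimedState_zero _
  | comp _ _ _ ih₂ => exact ih₂

theorem exists_add_nat_eq (h : M.Elapse s x t σ ξ) : ∃ c : ℕ, ξ + c = x + t := by
  induction h with
  | stay => exact ⟨0, by simp⟩
  | @tmo _ _ _ n _ _ _ hn => exact ⟨n, by simp [hn]⟩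
  | comp _ _ ih₁ ih₂ =>
    obtain ⟨c₁, h₁⟩ := ih₁
    obtain ⟨c₂, h₂⟩ := ih₂
    exact ⟨c₁ + c₂, by push_cast; linarith⟩

theorem exists_nat_eq_clock (h : M.Elapse s x t σ ξ) {k : ℕ} (hk : x + t = k) :
    ∃ m : ℕ, ξ = m := by
  obtain ⟨c, hc⟩ := h.exists_add_nat_eq
  have hck : c ≤ k := by exact_mod_cast (show (c : ℝ) ≤ k by linarith [h.isTimedState.1])
  exact ⟨k - c, by push_cast [hck]; linarith⟩

theorem refl (h : M.IsTimedState s x) : M.Elapse s x 0 s x := by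
  simpa using Elapse.stay (M := M) h.1 le_rfl (by simpa using h.2)

theorem eq_of_lt_timeout (h : M.Elapse s x t σ ξ)
    (hlt : ∀ n, (M.timeout s).2 = some n → x + t < n) : σ = s ∧ ξ = x + t := by
  induction h with
  | stay => exact ⟨rfl, rfl⟩
  | tmo _ _ hn heq => exact absurd (hlt _ hn) heq.not_lt
  | comp h₁ h₂ ih₁ ih₂ =>
    have ht₂ := h₂.duration_nonneg
    obtain ⟨rfl, rfl⟩ := ih₁ fun n hn => by linarith [hlt n hn]
    obtain ⟨rfl, rfl⟩ := ih₂ fun n hn => by linarith [hlt n hn]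
    exact ⟨rfl, by ring⟩

theorem split (h : M.Elapse s x t σ ξ) {t₁ t₂ : ℝ} (ht₁ : 0 ≤ t₁) (ht₂ : 0 ≤ t₂)
    (ht : t₁ + t₂ = t) : ∃ σ' ξ', M.Elapse s x t₁ σ' ξ' ∧ M.Elapse σ' ξ' t₂ σ ξ := by
  induction h generalizing t₁ t₂ with
  | @stay s x t hx _ hlt =>
    subst ht
    refine ⟨s, x + t₁, .stay hx ht₁ fun n hn => by linarith [hlt n hn], ?_⟩
    simpa [add_assoc] using
      Elapse.stay (M := M) (add_nonneg hx ht₁) ht₂ fun n hn => by linarith [hlt n hn]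
  | @tmo s x t n hx _ hn heq =>
    rcases ht₂.eq_or_lt with rfl | ht₂
    · rw [add_zero] at ht
      subst ht
      exact ⟨_, 0, .tmo hx ht₁ hn heq, refl (M.isTimedState_zero _)⟩
    · refine ⟨s, x + t₁, .stay hx ht₁ fun m hm => ?_, .tmo (add_nonneg hx ht₁) ht₂.le hn ?_⟩
      · cases hn.symm.trans hm; linarith
      · linarith
  | @comp s s' s'' x x' x'' a b h₁ h₂ ih₁ ih₂ =>
    rcases le_total t₁ a with hle | hle
    · obtain ⟨σ', ξ', e₁, e₂⟩ := ih₁ ht₁ (sub_nonneg.2 hle) (add_sub_cancel t₁ a)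
      exact ⟨σ', ξ', e₁, by simpa [show a - t₁ + b = t₂ by linarith] using e₂.comp h₂⟩
    · obtain ⟨σ', ξ', e₁, e₂⟩ := ih₂ (sub_nonneg.2 hle) ht₂ (by linarith)
      exact ⟨σ', ξ', by simpa using h₁.comp e₁, e₂⟩

end Elapse

end TFSMT

namespace OneBisim

variable {S I O R : Type*} {M : TFSMT S I O} {U : FSM (Option I) (Option O) R}
  {Rel : S → ℝ → R → Prop}

theorem run_delay (hB : OneBisim M U Rel) (k : ℕ) {s σ : S} {x ξ : ℝ} {r : R}
    (hs : M.IsTimedState s x) (hr : Rel s x r) (h : M.Elapse s x k σ ξ) :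
    ∃ r', U.Run r (List.replicate k none) (List.replicate k none) r' ∧ Rel σ ξ r' := by
  induction k generalizing σ ξ with
  | zero =>
    obtain ⟨rfl, rfl⟩ := h.eq_of_lt_timeout fun n hn => by simpa using hs.2 n hn
    exact ⟨r, by simpa using .nil r, by simpa using hr⟩
  | succ k ih =>
    obtain ⟨σ', ξ', h₁, h₂⟩ := h.split k.cast_nonneg zero_le_one (by push_cast; rfl)
    obtain ⟨r', hrun, hr'⟩ := ih h₁
    obtain ⟨r'', htr, hr''⟩ := (hB σ' ξ' r' hr').1 1 σ ξ zero_le_one rfl h₂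
    exact ⟨r'', by simpa [List.replicate_succ'] using hrun.append (.cons htr (.nil r'')), hr''⟩

theorem run_step (hB : OneBisim M U Rel) {s σ s' : S} {d ξ : ℝ} {i : I} {o : O} {r : R}
    (hr : Rel s 0 r) (hE : M.Elapse s 0 d σ ξ) (hIO : M.IOTrans σ ξ i o s') :
    ∃ r', U.Run r (List.replicate ⌊d⌋₊ none ++ [some i])
      (List.replicate ⌊d⌋₊ none ++ [some o]) r' ∧ Rel s' 0 r' := by
  set k := ⌊d⌋₊
  have hkd : (k : ℝ) ≤ d := Nat.floor_le hE.duration_nonneg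
  have hdk : d < k + 1 := Nat.lt_floor_add_one d
  obtain ⟨σ', ξ', h₁, h₂⟩ := hE.split k.cast_nonneg (sub_nonneg.2 hkd) (add_sub_cancel _ _)
  obtain ⟨rk, hrun, hrk⟩ := hB.run_delay k (M.isTimedState_zero s) hr h₁
  obtain ⟨m, rfl⟩ := h₁.exists_nat_eq_clock (zero_add _)
  have hstay : ∀ n, (M.timeout σ').2 = some n → (m : ℝ) + (d - k) < n := fun n hn => by
    have : m < n := by exact_mod_cast h₁.isTimedState.2 n hn
    have : (m : ℝ) + 1 ≤ n := by exact_mod_cast this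
    linarith
  obtain ⟨rfl, rfl⟩ := h₂.eq_of_lt_timeout hstay
  have hfloor : ⌊(m : ℝ)⌋₊ = ⌊m + (d - k)⌋₊ := by
    rw [Nat.floor_natCast, add_comm, Nat.floor_add_natCast (sub_nonneg.2 hkd),
      Nat.floor_eq_zero.2 (by linarith), zero_add]
  obtain ⟨r', htr, hr'⟩ := (hB σ m rk hrk).2.2.1 (d - k) i o s' (sub_nonneg.2 hkd) hfloor h₂ hIO
  exact ⟨r', hrun.append (.cons htr (.nil r')), hr'⟩

theorem run_oneAbs (hB : OneBisim M U Rel) {s sf : S} {t : ℝ} {v : List (I × ℝ)}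
    {w : List (O × ℝ)} (h : M.RunFrom s t v w sf) {r : R} (hr : Rel s 0 r) :
    ∃ rf, U.Run r (oneAbs t v) (oneAbs t w) rf ∧ Rel sf 0 rf := by
  induction h generalizing r with
  | nil s t => exact ⟨r, .nil r, hr⟩
  | cons hE hIO _ ih =>
    obtain ⟨r', hrun, hr'⟩ := hB.run_step hr hE hIO
    obtain ⟨rf, hrun', hrf⟩ := ih hr'
    exact ⟨rf, by simpa [oneAbs] using hrun.append hrun', hrf⟩

end OneBisim

theorem statement6_general {S R I O : Type} (T : TFSMT S I O)
    (U : FSM (Option I) (Option O) R)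
    (hUD : U.Deterministic)
    (Rel : S → ℝ → R → Prop) (hB : OneBisim T U Rel) (h0 : Rel T.init 0 U.init) :
    ∀ (v : List (I × ℝ)) (w : List (O × ℝ)), IsTimedWord v → T.Produces v w →
      ∀ u : List (Option O), U.Produces (oneAbs 0 v) u ↔ u = oneAbs 0 w := by
  rintro v w - ⟨sf, hrun⟩ u
  obtain ⟨rf, hU, -⟩ := hB.run_oneAbs hrun h0
  exact ⟨fun ⟨_, hU'⟩ => (hUD.run_eq hU' hU).1, fun hu => hu ▸ ⟨rf, hU⟩⟩

/-- If a complete deterministic TFSM with timeouts `T` and a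
complete deterministic untimed FSM `U` are related by a `𝟙`-bisimulation relating
`(s0,0)` to `r0`, then for every timed input word `v`,
`𝟙(B_T(v)) = B_U(𝟙(v))`. -/
theorem statement6 {S R I O : Type} [Finite S] (T : TFSMT S I O)
    (U : FSM (Option I) (Option O) R)
    (hTC : T.Complete) (hTD : T.Deterministic)
    (hUC : U.Complete) (hUD : U.Deterministic)
    (Rel : S → ℝ → R → Prop) (hB : OneBisim T U Rel) (h0 : Rel T.init 0 U.init) :
    ∀ (v : List (I × ℝ)) (w : List (O × ℝ)), IsTimedWord v → T.Produces v w →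
      ∀ u : List (Option O), U.Produces (oneAbs 0 v) u ↔ u = oneAbs 0 w :=
  statement6_general T U hUD Rel hB h0

end TFSMPaper
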